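/- Euler's identity for the q-exponential: for 0 < q < 1 and s complex, (s;q)_∞ = Σ_{n=0}^∞ ((-1)^n q^{n(n-1)/2} / (q;q)_n) s^n, where (s;q)_∞ = Π_{j=0}^∞ (1 - s q^j). -/

import Mathlib

/-! Euler's argument: `g(s) = ∑ₙ (-1)ⁿ q^(n choose 2) sⁿ / (q;q)ₙ` satisfies `g(s) = (1 - s) g(qs)`,
because its coefficients obey `(1 - q^(n+1)) cₙ₊₁ = -qⁿ cₙ`. Iterating gives
`g(s) = (s;q)ₙ g(qⁿ s)`, and since `g` is continuous at `0` with `g(0) = 1`, letting `n → ∞`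
yields `g(s) = (s;q)_∞`. -/

/-- The finite complex q-Pochhammer symbol `(a;q)_n = ∏_{j=0}^{n-1} (1 - a q^j)`. -/
noncomputable def qPochC (a q : ℂ) (n : ℕ) : ℂ := ∏ j ∈ Finset.range n, (1 - a * q ^ j)

/-- The infinite complex q-Pochhammer symbol `(a;q)_∞ = ∏_{j=0}^∞ (1 - a q^j)`. -/
noncomputable def qPochInfC (a q : ℂ) : ℂ := ∏' j : ℕ, (1 - a * q ^ j)

open Filter Topology

lemma qPochC_succ' (a q : ℂ) (n : ℕ) : qPochC a q (n + 1) = (1 - a) * qPochC (a * q) q n := by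
  rw [qPochC, Finset.prod_range_succ', pow_zero, mul_one, mul_comm, qPochC]
  simp only [pow_succ', mul_assoc]

section EulerSeries

variable {q : ℂ}

lemma pow_succ_ne_one (hq : ‖q‖ < 1) (n : ℕ) : q ^ (n + 1) ≠ 1 := fun h =>
  (pow_lt_one₀ (norm_nonneg q) hq n.succ_ne_zero).ne (by simpa using congrArg norm h)

lemma qPochC_self_ne_zero (hq : ‖q‖ < 1) (n : ℕ) : qPochC q q n ≠ 0 :=
  Finset.prod_ne_zero_iff.2 fun j _ => by
    rw [← pow_succ']
    exact sub_ne_zero.2 (pow_succ_ne_one hq j).symm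

lemma one_sub_norm_le_norm_one_sub_pow_succ (hq : ‖q‖ < 1) (n : ℕ) :
    1 - ‖q‖ ≤ ‖1 - q ^ (n + 1)‖ :=
  calc 1 - ‖q‖ ≤ 1 - ‖q‖ ^ (n + 1) := by
        gcongr
        exact pow_le_of_le_one (norm_nonneg q) hq.le n.succ_ne_zero
    _ = ‖(1 : ℂ)‖ - ‖q ^ (n + 1)‖ := by rw [norm_one, norm_pow]
    _ ≤ ‖1 - q ^ (n + 1)‖ := norm_sub_norm_le _ _

noncomputable def eulerCoeff (q : ℂ) (n : ℕ) : ℂ := (-1) ^ n * q ^ n.choose 2 / qPochC q q n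

noncomputable def eulerSeries (q s : ℂ) : ℂ := ∑' n, eulerCoeff q n * s ^ n

@[simp]
lemma eulerCoeff_zero (q : ℂ) : eulerCoeff q 0 = 1 := by
  simp [eulerCoeff, qPochC]

lemma one_sub_pow_mul_eulerCoeff_succ (hq : ‖q‖ < 1) (n : ℕ) :
    (1 - q ^ (n + 1)) * eulerCoeff q (n + 1) = -(q ^ n * eulerCoeff q n) := by
  have h₁ := qPochC_self_ne_zero hq n
  have h₂ := sub_ne_zero.2 (pow_succ_ne_one hq n).symm
  rw [eulerCoeff, eulerCoeff, qPochC, Finset.prod_range_succ, ← qPochC, ← pow_succ',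
    Nat.choose_succ_succ, Nat.choose_one_right]
  field_simp
  ring

lemma norm_eulerCoeff_succ_le (hq : ‖q‖ < 1) (n : ℕ) :
    ‖eulerCoeff q (n + 1)‖ ≤ ‖q‖ ^ n / (1 - ‖q‖) * ‖eulerCoeff q n‖ := by
  have hpos : 0 < 1 - ‖q‖ := sub_pos.2 hq
  have h := congrArg norm (one_sub_pow_mul_eulerCoeff_succ hq n)
  rw [norm_mul, norm_neg, norm_mul, norm_pow] at h
  rw [div_mul_eq_mul_div, le_div_iff₀ hpos, ← h, mul_comm]
  gcongr
  exact one_sub_norm_le_norm_one_sub_pow_succ hq n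

lemma summable_norm_eulerCoeff_mul_pow (hq : ‖q‖ < 1) (s : ℂ) :
    Summable fun n => ‖eulerCoeff q n * s ^ n‖ := by
  have hsmall : ∀ᶠ n in atTop, ‖q‖ ^ n / (1 - ‖q‖) * ‖s‖ ≤ 2⁻¹ := by
    refine (Tendsto.eventually_le_const (by norm_num : (0 : ℝ) < 2⁻¹) ?_)
    simpa using ((tendsto_pow_atTop_nhds_zero_of_lt_one (norm_nonneg q) hq).div_const
      (1 - ‖q‖)).mul_const ‖s‖
  refine summable_of_ratio_norm_eventually_le (r := 2⁻¹) (by norm_num) ?_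
  filter_upwards [hsmall] with n hn
  simp only [norm_norm, norm_mul, norm_pow, pow_succ]
  calc ‖eulerCoeff q (n + 1)‖ * (‖s‖ ^ n * ‖s‖)
      ≤ ‖q‖ ^ n / (1 - ‖q‖) * ‖eulerCoeff q n‖ * (‖s‖ ^ n * ‖s‖) := by
        gcongr; exact norm_eulerCoeff_succ_le hq n
    _ = ‖q‖ ^ n / (1 - ‖q‖) * ‖s‖ * (‖eulerCoeff q n‖ * ‖s‖ ^ n) := by ring
    _ ≤ 2⁻¹ * (‖eulerCoeff q n‖ * ‖s‖ ^ n) := by gcongr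

lemma summable_eulerCoeff_mul_pow (hq : ‖q‖ < 1) (s : ℂ) :
    Summable fun n => eulerCoeff q n * s ^ n :=
  (summable_norm_eulerCoeff_mul_pow hq s).of_norm

lemma eulerSeries_eq_one_sub_mul (hq : ‖q‖ < 1) (s : ℂ) :
    eulerSeries q s = (1 - s) * eulerSeries q (q * s) := by
  set u := fun n => eulerCoeff q n * (q * s) ^ n
  have hu : Summable u := summable_eulerCoeff_mul_pow hq (q * s)
  calc eulerSeries q s = 1 + ∑' n, eulerCoeff q (n + 1) * s ^ (n + 1) := by
        simp [eulerSeries, (summable_eulerCoeff_mul_pow hq s).tsum_eq_zero_add]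
    _ = 1 + ∑' n, (u (n + 1) - s * u n) := by
        congr 1
        refine tsum_congr fun n => ?_
        linear_combination s ^ (n + 1) * one_sub_pow_mul_eulerCoeff_succ hq n
    _ = (u 0 + ∑' n, u (n + 1)) - s * ∑' n, u n := by
        rw [((summable_nat_add_iff 1).2 hu).tsum_sub (hu.mul_left s), tsum_mul_left]
        simp only [eulerCoeff_zero, pow_zero, mul_one, u]
        ring
    _ = (1 - s) * eulerSeries q (q * s) := by
        rw [← hu.tsum_eq_zero_add, eulerSeries]
        ring

lemma eulerSeries_eq_qPochC_mul (hq : ‖q‖ < 1) (s : ℂ) (n : ℕ) :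
    eulerSeries q s = qPochC s q n * eulerSeries q (q ^ n * s) := by
  induction n generalizing s with
  | zero => simp [qPochC]
  | succ n ih =>
    rw [eulerSeries_eq_one_sub_mul hq, ih, qPochC_succ', pow_succ, mul_comm s q, mul_assoc,
      mul_assoc]

lemma tendsto_eulerSeries_nhds_zero (hq : ‖q‖ < 1) :
    Tendsto (eulerSeries q) (𝓝 0) (𝓝 1) := by
  have hlim : ∑' n, eulerCoeff q n * (0 : ℂ) ^ n = 1 := by
    rw [tsum_eq_single 0 fun n hn => by simp [hn]]
    simp
  rw [← hlim]
  refine tendsto_tsum_of_dominated_convergence (summable_norm_eulerCoeff_mul_pow hq 1)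
    (fun n => ((continuous_pow n).tendsto 0).const_mul _) ?_
  filter_upwards [Metric.closedBall_mem_nhds (0 : ℂ) one_pos] with t ht n
  rw [mem_closedBall_zero_iff] at ht
  simp only [norm_mul, norm_pow, one_pow, mul_one]
  exact mul_le_of_le_one_right (norm_nonneg _) (pow_le_one₀ (norm_nonneg t) ht)

lemma multipliable_one_sub_mul_pow (hq : ‖q‖ < 1) (s : ℂ) :
    Multipliable fun n => 1 - s * q ^ n := by
  simpa only [sub_eq_add_neg] using
    Complex.multipliable_one_add_of_summable ((summable_geometric_of_norm_lt_one hq).mul_left s).neg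

theorem qPochInfC_eq_eulerSeries (hq : ‖q‖ < 1) (s : ℂ) : qPochInfC s q = eulerSeries q s := by
  have hprod : Tendsto (qPochC s q) atTop (𝓝 (qPochInfC s q)) :=
    (multipliable_one_sub_mul_pow hq s).hasProd.tendsto_prod_nat
  have htail : Tendsto (fun n => eulerSeries q (q ^ n * s)) atTop (𝓝 1) := by
    refine (tendsto_eulerSeries_nhds_zero hq).comp ?_
    simpa using (tendsto_pow_atTop_nhds_zero_of_norm_lt_one hq).mul_const s
  have h := hprod.mul htail
  rw [mul_one] at h
  simp only [← eulerSeries_eq_qPochC_mul hq] at h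
  exact tendsto_nhds_unique h tendsto_const_nhds

end EulerSeries

/-- Euler's identity for the q-exponential: for `0 < q < 1` and `s ∈ ℂ`,
`(s;q)_∞ = ∑_{n=0}^∞ (-1)^n q^{n(n-1)/2} s^n / (q;q)_n`. -/
theorem euler_q_exponential
    (q : ℝ) (hq0 : 0 < q) (hq1 : q < 1) (s : ℂ) :
    qPochInfC s (q : ℂ)
      = ∑' n : ℕ, ((-1) ^ n * (q : ℂ) ^ (n.choose 2) / qPochC (q : ℂ) (q : ℂ) n) * s ^ n := by
  refine qPochInfC_eq_eulerSeries ?_ s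
  rwa [Complex.norm_real, Real.norm_of_nonneg hq0.le]
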